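/- There exists a universal constant C > 0 such that for every ε > 0 and every spin field v : Ω⁰_ε → S¹, the total variation of the discrete vorticity measure satisfies |μ_v|(Ω) ≤ C · XY_ε(v), where XY_ε(v) = ½ Σ_{(i,j) ∈ Ω¹_ε} |v(i) − v(j)|². -/

import Mathlib

open MeasureTheory Filter

noncomputable section

/-- The position in `ℝ²` of the lattice point `i ∈ ℤ²` of the lattice `εℤ²`. -/
def pt (ε : ℝ) (i : ℤ × ℤ) : ℝ × ℝ := (ε * i.1, ε * i.2)

/-- `i` is a point of the lattice `Ω⁰_ε = εℤ² ∩ Ω`. -/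
def latticePt (ε : ℝ) (Ω : Set (ℝ × ℝ)) (i : ℤ × ℤ) : Prop := pt ε i ∈ Ω

/-- `(i, j)` is a nearest-neighbor bond in `Ω¹_ε`: both endpoints lie in `Ω` and
`j = i + e₁` or `j = i + e₂` (so that `|i − j| = ε` and `i ≤ j` componentwise). -/
def bond (ε : ℝ) (Ω : Set (ℝ × ℝ)) (i j : ℤ × ℤ) : Prop :=
  latticePt ε Ω i ∧ latticePt ε Ω j ∧ (j = i + (1, 0) ∨ j = i + (0, 1))

/-- `i ∈ Ω²_ε`: the closed cell `i + [0, ε]²` is contained in `Ω`. -/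
def cellIn (ε : ℝ) (Ω : Set (ℝ × ℝ)) (i : ℤ × ℤ) : Prop :=
  Set.Icc (pt ε i) (pt ε i + (ε, ε)) ⊆ Ω

/-- The center of the cell `i + [0, ε]²`. -/
def cellCenter (ε : ℝ) (i : ℤ × ℤ) : ℝ × ℝ := pt ε i + (ε / 2, ε / 2)

/-- The projection `P : ℝ → ℤ` onto the nearest integer (with the tie-breaking convention
making `t − P t ∈ (−1/2, 1/2]`). -/
def Pint (t : ℝ) : ℤ := ⌈t - 1 / 2⌉

/-- The elastic part of the discrete strain of `u` on the (oriented) bond from `i` to `j`: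
`β^e_u = 𝐝u − P(𝐝u) ∈ (−1/2, 1/2]`, where `𝐝u_{i,j} = u(j) − u(i)`. -/
def betaE (u : ℤ × ℤ → ℝ) (i j : ℤ × ℤ) : ℝ :=
  (u j - u i) - (Pint (u j - u i) : ℝ)

/-- The plastic part of the discrete strain: `β^p_u = P(𝐝u) ∈ ℤ`. -/
def betaP (u : ℤ × ℤ → ℝ) (i j : ℤ × ℤ) : ℝ := (Pint (u j - u i) : ℝ)

/-- The discrete curl of a bond function `ξ` around the cell with lower-left corner `i`:
`𝐝ξ(i) = ξ_{i,i+e₂} + ξ_{i+e₂,i+e₁+e₂} − ξ_{i+e₁,i+e₁+e₂} − ξ_{i,i+e₁}`. -/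
def dcurl (ξ : ℤ × ℤ → ℤ × ℤ → ℝ) (i : ℤ × ℤ) : ℝ :=
  ξ i (i + (0, 1)) + ξ (i + (0, 1)) (i + (1, 1)) - ξ (i + (1, 0)) (i + (1, 1)) -
    ξ i (i + (1, 0))

/-- The discrete dislocation function `α_u(i) = 𝐝β^e_u(i)`. -/
def alphaSD (u : ℤ × ℤ → ℝ) (i : ℤ × ℤ) : ℝ := dcurl (betaE u) i

/-- The discrete screw-dislocation energy
`SD_ε(u) = ½ Σ_{(i,j) ∈ Ω¹_ε} dist²(u(i) − u(j), ℤ)`. -/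
def SDen (ε : ℝ) (Ω : Set (ℝ × ℝ)) (u : ℤ × ℤ → ℝ) : ℝ :=
  (1 / 2) * ∑' b : {b : (ℤ × ℤ) × (ℤ × ℤ) // bond ε Ω b.1 b.2},
    (betaE u b.1.1 b.1.2) ^ 2

/-- The total variation `|μ_u|(Ω)` of the discrete dislocation measure
`μ_u = Σ_{i ∈ Ω²_ε} α_u(i) δ_{i+(ε/2,ε/2)}`. -/
def SDtv (ε : ℝ) (Ω : Set (ℝ × ℝ)) (u : ℤ × ℤ → ℝ) : ℝ :=
  ∑' i : {i : ℤ × ℤ // cellIn ε Ω i}, |alphaSD u i|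

/-- The phase `u(v) = θ(v)/2π ∈ [0, 1)` of a spin field `v` with values in `S¹ ⊆ ℂ`
(defined by `v = e^{2πi u(v)}`; any determination of the phase gives the same discrete
vorticity). -/
def phaseu (v : ℤ × ℤ → ℂ) (l : ℤ × ℤ) : ℝ :=
  if 0 ≤ (v l).arg then (v l).arg / (2 * Real.pi) else (v l).arg / (2 * Real.pi) + 1

/-- The discrete vorticity `γ_v = α_{θ(v)/2π}` of a spin field `v`. -/
def gammaXY (v : ℤ × ℤ → ℂ) (i : ℤ × ℤ) : ℝ := alphaSD (phaseu v) i

/-- The `XY` energy `XY_ε(v) = ½ Σ_{(i,j) ∈ Ω¹_ε} |v(i) − v(j)|²`. -/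
def XYen (ε : ℝ) (Ω : Set (ℝ × ℝ)) (v : ℤ × ℤ → ℂ) : ℝ :=
  (1 / 2) * ∑' b : {b : (ℤ × ℤ) × (ℤ × ℤ) // bond ε Ω b.1 b.2},
    ‖v b.1.1 - v b.1.2‖ ^ 2

/-- The total variation `|μ_v|(Ω)` of the discrete vorticity measure. -/
def XYtv (ε : ℝ) (Ω : Set (ℝ × ℝ)) (v : ℤ × ℤ → ℂ) : ℝ :=
  ∑' i : {i : ℤ × ℤ // cellIn ε Ω i}, |gammaXY v i|

/-!
Since `β^e = 𝐝u − P(𝐝u)` with `P(𝐝u)` integer-valued and `𝐝𝐝u = 0`, the vorticity `γ_v(i)` is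
an integer, so `|γ_v(i)| ≤ γ_v(i)² ≤ 4 Σ (β^e)²`, the sum running over the four bonds of the cell.
On a bond, `v = e^{2πi u}` gives `|v(i) − v(j)| = 2 |sin(π β^e)| ≥ 4 |β^e|` by Jordan's inequality,
as `|β^e| ≤ 1/2`. Hence `|γ_v(i)| ≤ ¼ Σ |v(i) − v(j)|²` over the cell, and since each of the four
sides of a cell determines the cell, summing over the cells gives `|μ_v|(Ω) ≤ 2 XY_ε(v)`.
-/

open Real

lemma abs_sub_Pint_le_half (t : ℝ) : |t - Pint t| ≤ 1 / 2 := by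
  unfold Pint
  rw [abs_le]
  constructor <;> linarith [Int.ceil_lt_add_one (t - 1 / 2), Int.le_ceil (t - 1 / 2)]

lemma two_mul_abs_sub_Pint_le_abs_sin (t : ℝ) : 2 * |t - Pint t| ≤ |sin (π * t)| := by
  have hsin : |sin (π * t)| = |sin (π * (t - Pint t))| := by
    rw [show π * (t - Pint t) = π * t - Pint t * π by ring, sin_sub_int_mul_pi, abs_mul, abs_zpow,
      abs_neg, abs_one, one_zpow, one_mul]
  have hπ : |π * (t - Pint t)| ≤ π / 2 := by
    rw [abs_mul, abs_of_pos pi_pos]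
    nlinarith [abs_sub_Pint_le_half t, pi_pos]
  calc 2 * |t - Pint t| = 2 / π * |π * (t - Pint t)| := by
        rw [abs_mul, abs_of_pos pi_pos]; field_simp
    _ ≤ |sin (π * t)| := hsin ▸ mul_abs_le_abs_sin hπ

lemma norm_exp_I_mul_sub_exp_I_mul (s t : ℝ) :
    ‖Complex.exp (Complex.I * s) - Complex.exp (Complex.I * t)‖ = 2 * |sin ((s - t) / 2)| := by
  have h : Complex.exp (Complex.I * s) - Complex.exp (Complex.I * t) =
      Complex.exp (Complex.I * t) * (Complex.exp (Complex.I * ↑(s - t)) - 1) := by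
    rw [mul_sub, ← Complex.exp_add]; push_cast; ring_nf
  rw [h, norm_mul, Complex.norm_exp_I_mul_ofReal, one_mul,
    Complex.norm_exp_I_mul_ofReal_sub_one, norm_mul, Real.norm_two, Real.norm_eq_abs]

lemma four_mul_abs_betaE_le (u : ℤ × ℤ → ℝ) (i j : ℤ × ℤ) :
    4 * |betaE u i j| ≤
      ‖Complex.exp (Complex.I * ↑(2 * π * u i)) - Complex.exp (Complex.I * ↑(2 * π * u j))‖ := by
  rw [norm_exp_I_mul_sub_exp_I_mul,
    show (2 * π * u i - 2 * π * u j) / 2 = -(π * (u j - u i)) by ring, sin_neg, abs_neg]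
  have := two_mul_abs_sub_Pint_le_abs_sin (u j - u i)
  unfold betaE
  linarith

lemma exp_I_mul_two_pi_mul_phaseu (v : ℤ × ℤ → ℂ) {l : ℤ × ℤ} (hv : ‖v l‖ = 1) :
    Complex.exp (Complex.I * ↑(2 * π * phaseu v l)) = v l := by
  have harg : Complex.exp (Complex.I * (v l).arg) = v l := by
    simpa [hv, mul_comm] using Complex.norm_mul_exp_arg_mul_I (v l)
  unfold phaseu
  split_ifs
  · conv_rhs => rw [← harg]
    congr 1; push_cast; field_simp
  · conv_rhs => rw [← harg]
    rw [show Complex.I * ↑(2 * π * ((v l).arg / (2 * π) + 1)) =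
      Complex.I * (v l).arg + 2 * π * Complex.I by push_cast; field_simp]
    rw [Complex.exp_add, Complex.exp_two_pi_mul_I, mul_one]

lemma abs_intCast_le_sq (n : ℤ) : |(n : ℝ)| ≤ (n : ℝ) ^ 2 := by
  exact_mod_cast (Int.natCast_natAbs n ▸ Int.natAbs_le_self_sq n)

lemma alphaSD_eq_neg_dcurl_betaP (u : ℤ × ℤ → ℝ) (i : ℤ × ℤ) :
    alphaSD u i = -dcurl (betaP u) i := by
  simp only [alphaSD, dcurl, betaE, betaP]
  ring

lemma alphaSD_mem_range_intCast (u : ℤ × ℤ → ℝ) (i : ℤ × ℤ) :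
    alphaSD u i ∈ Set.range ((↑) : ℤ → ℝ) :=
  ⟨-(Pint (u (i + (0, 1)) - u i) + Pint (u (i + (1, 1)) - u (i + (0, 1))) -
      Pint (u (i + (1, 1)) - u (i + (1, 0))) - Pint (u (i + (1, 0)) - u i)), by
    rw [alphaSD_eq_neg_dcurl_betaP]; simp only [dcurl, betaP]; push_cast; ring⟩

lemma sq_add_sub_sub_le (a b c d : ℝ) :
    (a + b - c - d) ^ 2 ≤ 4 * (a ^ 2 + b ^ 2 + c ^ 2 + d ^ 2) := by
  nlinarith [sq_nonneg (a - b), sq_nonneg (a + c), sq_nonneg (a + d), sq_nonneg (b + c),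
    sq_nonneg (b + d), sq_nonneg (c - d)]

-- in the order of the terms of `dcurl`
def cellBonds (i : ℤ × ℤ) : Fin 4 → (ℤ × ℤ) × (ℤ × ℤ) :=
  ![(i, i + (0, 1)), (i + (0, 1), i + (1, 1)), (i + (1, 0), i + (1, 1)), (i, i + (1, 0))]

lemma abs_alphaSD_le (u : ℤ × ℤ → ℝ) (i : ℤ × ℤ) :
    |alphaSD u i| ≤ 4 * ∑ k, betaE u (cellBonds i k).1 (cellBonds i k).2 ^ 2 := by
  obtain ⟨n, hn⟩ := alphaSD_mem_range_intCast u i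
  calc |alphaSD u i| ≤ alphaSD u i ^ 2 := hn ▸ abs_intCast_le_sq n
    _ ≤ _ := by
      simpa [Fin.sum_univ_four, cellBonds, alphaSD, dcurl] using sq_add_sub_sub_le _ _ _ _

lemma sq_betaE_phaseu_le (v : ℤ × ℤ → ℂ) (hv : ∀ l, ‖v l‖ = 1) (i j : ℤ × ℤ) :
    betaE (phaseu v) i j ^ 2 ≤ ‖v i - v j‖ ^ 2 / 16 := by
  have h := four_mul_abs_betaE_le (phaseu v) i j
  rw [exp_I_mul_two_pi_mul_phaseu v (hv i), exp_I_mul_two_pi_mul_phaseu v (hv j)] at h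
  nlinarith [sq_abs (betaE (phaseu v) i j), abs_nonneg (betaE (phaseu v) i j)]

lemma abs_gammaXY_le (v : ℤ × ℤ → ℂ) (hv : ∀ l, ‖v l‖ = 1) (i : ℤ × ℤ) :
    |gammaXY v i| ≤ 1 / 4 * ∑ k, ‖v (cellBonds i k).1 - v (cellBonds i k).2‖ ^ 2 :=
  calc |gammaXY v i| ≤ 4 * ∑ k, betaE (phaseu v) (cellBonds i k).1 (cellBonds i k).2 ^ 2 :=
        abs_alphaSD_le _ i
    _ ≤ 4 * ∑ k, ‖v (cellBonds i k).1 - v (cellBonds i k).2‖ ^ 2 / 16 := by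
        gcongr with k; exact sq_betaE_phaseu_le v hv _ _
    _ = 1 / 4 * ∑ k, ‖v (cellBonds i k).1 - v (cellBonds i k).2‖ ^ 2 := by
        rw [← Finset.sum_div]; ring

lemma pt_add (ε : ℝ) (i d : ℤ × ℤ) : pt ε (i + d) = pt ε i + pt ε d := by
  simp only [pt, Prod.fst_add, Prod.snd_add, Int.cast_add, mul_add, Prod.mk_add_mk]

lemma latticePt_add_of_cellIn {ε : ℝ} (hε : 0 ≤ ε) {Ω : Set (ℝ × ℝ)} {i : ℤ × ℤ}
    (hc : cellIn ε Ω i) {d : ℤ × ℤ} (hd : d ∈ Set.Icc 0 1) : latticePt ε Ω (i + d) := by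
  simp only [Set.mem_Icc, Prod.le_def, Prod.fst_zero, Prod.snd_zero, Prod.fst_one,
    Prod.snd_one] at hd
  obtain ⟨⟨h1, h2⟩, h3, h4⟩ := hd
  have hpt : 0 ≤ pt ε d ∧ pt ε d ≤ (ε, ε) := by
    simp only [pt, Prod.le_def, Prod.fst_zero, Prod.snd_zero]
    refine ⟨⟨mul_nonneg hε ?_, mul_nonneg hε ?_⟩, mul_le_of_le_one_right hε ?_,
      mul_le_of_le_one_right hε ?_⟩ <;> exact_mod_cast ‹_›
  exact hc ⟨by simpa [pt_add] using hpt.1, by simpa [pt_add] using hpt.2⟩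

lemma bond_cellBonds {ε : ℝ} (hε : 0 ≤ ε) {Ω : Set (ℝ × ℝ)} {i : ℤ × ℤ}
    (hc : cellIn ε Ω i) (k : Fin 4) : bond ε Ω (cellBonds i k).1 (cellBonds i k).2 := by
  have corner : ∀ d ∈ Set.Icc (0 : ℤ × ℤ) 1, latticePt ε Ω (i + d) :=
    fun d hd => latticePt_add_of_cellIn hε hc hd
  have hi : latticePt ε Ω i := by simpa using corner 0 (by simp)
  fin_cases k <;> simp only [cellBonds, Fin.reduceFinMk, Fin.zero_eta, Fin.isValue,
    Matrix.cons_val]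
  · exact ⟨hi, corner _ (by decide), Or.inr rfl⟩
  · exact ⟨corner _ (by decide), corner _ (by decide), Or.inl (by rw [add_assoc]; rfl)⟩
  · exact ⟨corner _ (by decide), corner _ (by decide), Or.inr (by rw [add_assoc]; rfl)⟩
  · exact ⟨hi, corner _ (by decide), Or.inl rfl⟩

lemma cellBonds_injective (k : Fin 4) : Function.Injective fun i => cellBonds i k := by
  intro i j h
  have h1 := congrArg Prod.fst h
  fin_cases k <;> simpa [cellBonds] using h1

lemma dist_pt {ε : ℝ} (hε : 0 ≤ ε) (i j : ℤ × ℤ) : dist (pt ε i) (pt ε j) = ε * dist i j := by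
  simp only [pt, Prod.dist_eq, Real.dist_eq, ← mul_sub, abs_mul, abs_of_nonneg hε,
    ← Int.dist_cast_real, mul_max_of_nonneg _ _ hε]

lemma finite_latticePt {ε : ℝ} (hε : 0 < ε) {Ω : Set (ℝ × ℝ)} (hΩ : Bornology.IsBounded Ω) :
    {i | latticePt ε Ω i}.Finite := by
  obtain ⟨C, hC⟩ := Metric.isBounded_iff.1 hΩ
  have hbdd : Bornology.IsBounded {i | latticePt ε Ω i} := Metric.isBounded_iff.2
    ⟨C / ε, fun i hi j hj => by
      rw [le_div_iff₀ hε, mul_comm, ← dist_pt hε.le]; exact hC hi hj⟩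
  exact hbdd.isCompact_closure.finite_of_discrete.subset subset_closure

lemma finite_bond {ε : ℝ} (hε : 0 < ε) {Ω : Set (ℝ × ℝ)} (hΩ : Bornology.IsBounded Ω) :
    {b : (ℤ × ℤ) × (ℤ × ℤ) | bond ε Ω b.1 b.2}.Finite :=
  ((finite_latticePt hε hΩ).prod (finite_latticePt hε hΩ)).subset fun _ hb => ⟨hb.1, hb.2.1⟩

lemma tsum_le_mul_card_mul_tsum {ι α β : Type*} [Fintype ι] {f : α → ℝ} {g : β → ℝ} {c : ℝ}
    (hc : 0 ≤ c) (hf : 0 ≤ f) (hg : 0 ≤ g) (hgs : Summable g) (e : ι → α → β)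
    (he : ∀ k, Function.Injective (e k)) (hfg : ∀ a, f a ≤ c * ∑ k, g (e k a)) :
    ∑' a, f a ≤ c * Fintype.card ι * ∑' b, g b := by
  have hs : ∀ k, Summable fun a => g (e k a) := fun k => hgs.comp_injective (he k)
  have hsum : Summable fun a => c * ∑ k, g (e k a) :=
    (summable_sum fun k _ => hs k).mul_left c
  calc ∑' a, f a ≤ ∑' a, c * ∑ k, g (e k a) :=
        (hsum.of_nonneg_of_le hf hfg).tsum_le_tsum hfg hsum
    _ = c * ∑ k, ∑' a, g (e k a) := by
        rw [tsum_mul_left, Summable.tsum_finsetSum fun k _ => hs k]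
    _ ≤ c * ∑ _k : ι, ∑' b, g b := by
        gcongr with k; exact tsum_comp_le_tsum_of_inj hgs hg (he k)
    _ = c * Fintype.card ι * ∑' b, g b := by
        rw [Finset.sum_const, Finset.card_univ, nsmul_eq_mul, mul_assoc]

/-- There is a universal constant `C > 0` such that for every `ε > 0` and every spin field
`v : Ω⁰_ε → S¹`, the total variation of the discrete vorticity measure is controlled by the
`XY` energy: `|μ_v|(Ω) ≤ C · XY_ε(v)`. -/
theorem XY_total_variation_bound :
    ∃ C : ℝ, 0 < C ∧
      ∀ (Ω : Set (ℝ × ℝ)), IsOpen Ω → Bornology.IsBounded Ω →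
        ∀ ε : ℝ, 0 < ε → ∀ v : ℤ × ℤ → ℂ, (∀ l, ‖v l‖ = 1) →
          XYtv ε Ω v ≤ C * XYen ε Ω v := by
  refine ⟨2, two_pos, fun Ω _ hΩ ε hε v hv => ?_⟩
  have : Finite {b : (ℤ × ℤ) × (ℤ × ℤ) // bond ε Ω b.1 b.2} := (finite_bond hε hΩ).to_subtype
  have key := tsum_le_mul_card_mul_tsum (by norm_num : (0 : ℝ) ≤ 1 / 4)
    (f := fun i : {i // cellIn ε Ω i} => |gammaXY v i|)
    (g := fun b : {b : (ℤ × ℤ) × (ℤ × ℤ) // bond ε Ω b.1 b.2} => ‖v b.1.1 - v b.1.2‖ ^ 2)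
    (fun _ => abs_nonneg _) (fun _ => sq_nonneg _) Summable.of_finite
    (fun k i => ⟨cellBonds i k, bond_cellBonds hε.le i.2 k⟩)
    (fun k _ _ h => Subtype.ext (cellBonds_injective k (congrArg Subtype.val h)))
    (fun i => abs_gammaXY_le v hv i)
  rw [Fintype.card_fin] at key
  unfold XYtv XYen
  linarith
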